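/- arXiv:2601.03402 — 3 statements merged into one kernel-verified Lean document; each statement's English description precedes it below -/
import Mathlib

section
/- Let C, D be constants with 0 < C ≤ D < 1 and let ω ∈ [C, D]. Suppose ξ is a real number whose fractional part lies in [1/6, 5/6]. Then |ω + (1−ω)e^{−2πiξ}|² ≤ 1 − C(1−D), and in particular |ω + (1−ω)e^{−2πiξ}| ≤ γ where γ = √(1 − C(1−D)) < 1. -/
open Real Complex

lemma Real.cos_le_one_half_of_mem_Icc {x : ℝ} (hx : x ∈ Set.Icc (π / 3) (5 * π / 3)) :
    Real.cos x ≤ 1 / 2 := by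
  obtain ⟨h1, h2⟩ := hx
  have hpi := Real.pi_pos
  -- cos x = -cos (x - π) and |x - π| ≤ 2π/3, where cos = -1/2
  have h : Real.cos (π - π / 3) ≤ Real.cos |x - π| :=
    Real.cos_le_cos_of_nonneg_of_le_pi (abs_nonneg _) (by linarith)
      (abs_le.2 ⟨by linarith, by linarith⟩)
  rw [Real.cos_abs, Real.cos_sub_pi, Real.cos_pi_sub, Real.cos_pi_div_three] at h
  linarith

lemma Real.cos_two_pi_mul_le_one_half {ξ : ℝ} (hξ : Int.fract ξ ∈ Set.Icc (1 / 6 : ℝ) (5 / 6)) :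
    Real.cos (2 * π * ξ) ≤ 1 / 2 := by
  have hpi := Real.pi_pos
  have hperiod : Real.cos (2 * π * ξ) = Real.cos (2 * π * Int.fract ξ) := by
    have : 2 * π * ξ = 2 * π * Int.fract ξ + ⌊ξ⌋ * (2 * π) := by rw [Int.fract]; ring
    rw [this, Real.cos_add_int_mul_two_pi]
  rw [hperiod]
  exact Real.cos_le_one_half_of_mem_Icc ⟨by nlinarith [hξ.1], by nlinarith [hξ.2]⟩

lemma Complex.sq_norm_add_one_sub_mul_exp (ω θ : ℝ) :
    ‖(ω : ℂ) + (1 - ω) * exp (θ * I)‖ ^ 2 = 1 - 2 * ω * (1 - ω) * (1 - Real.cos θ) := by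
  rw [Complex.sq_norm, Complex.normSq_apply]
  simp only [add_re, ofReal_re, mul_re, sub_re, one_re, exp_ofReal_mul_I_re, sub_im, one_im,
    ofReal_im, sub_self, exp_ofReal_mul_I_im, zero_mul, sub_zero, add_im, mul_im, add_zero, zero_add]
  linear_combination (1 - ω) ^ 2 * Real.sin_sq_add_cos_sq θ

lemma mul_one_sub_le_mul_one_sub {C D ω : ℝ} (hC : 0 ≤ C) (hD : D ≤ 1) (hω : ω ∈ Set.Icc C D) :
    C * (1 - D) ≤ ω * (1 - ω) :=
  mul_le_mul hω.1 (by linarith [hω.2]) (by linarith) (hC.trans hω.1)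

theorem stmt13_general (C D ω ξ : ℝ) (hC : 0 < C) (hD : D < 1)
    (hω : ω ∈ Set.Icc C D)
    (hξ : Int.fract ξ ∈ Set.Icc (1 / 6 : ℝ) (5 / 6)) :
    ‖(ω : ℂ) + ((1 : ℂ) - ω) * Complex.exp (-(2 * Real.pi * Complex.I * ξ))‖ ^ 2
        ≤ 1 - C * (1 - D) ∧
      ‖(ω : ℂ) + ((1 : ℂ) - ω) * Complex.exp (-(2 * Real.pi * Complex.I * ξ))‖
        ≤ Real.sqrt (1 - C * (1 - D)) ∧
      Real.sqrt (1 - C * (1 - D)) < 1 := by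
  have hexp : -(2 * π * I * ξ) = ((-(2 * π * ξ) : ℝ) : ℂ) * I := by push_cast; ring
  have hcos : Real.cos (-(2 * π * ξ)) ≤ 1 / 2 := by
    rw [Real.cos_neg]; exact Real.cos_two_pi_mul_le_one_half hξ
  have hprod := mul_one_sub_le_mul_one_sub hC.le hD.le hω
  have hsq : ‖(ω : ℂ) + (1 - ω) * exp (-(2 * π * I * ξ))‖ ^ 2 ≤ 1 - C * (1 - D) := by
    rw [hexp, Complex.sq_norm_add_one_sub_mul_exp]
    have hpos : 0 < ω * (1 - ω) := mul_pos (hC.trans_le hω.1) (sub_pos.2 (hω.2.trans_lt hD))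
    linarith [mul_le_mul_of_nonneg_left hcos hpos.le]
  refine ⟨hsq, Real.le_sqrt_of_sq_le hsq, ?_⟩
  exact (Real.sqrt_lt' one_pos).2 (by linarith [mul_pos hC (sub_pos.2 hD)])

theorem stmt13 (C D ω ξ : ℝ) (hC : 0 < C) (hCD : C ≤ D) (hD : D < 1)
    (hω : ω ∈ Set.Icc C D)
    (hξ : Int.fract ξ ∈ Set.Icc (1 / 6 : ℝ) (5 / 6)) :
    ‖(ω : ℂ) + ((1 : ℂ) - ω) * Complex.exp (-(2 * Real.pi * Complex.I * ξ))‖ ^ 2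
        ≤ 1 - C * (1 - D) ∧
      ‖(ω : ℂ) + ((1 : ℂ) - ω) * Complex.exp (-(2 * Real.pi * Complex.I * ξ))‖
        ≤ Real.sqrt (1 - C * (1 - D)) ∧
      Real.sqrt (1 - C * (1 - D)) < 1 :=
  stmt13_general C D ω ξ hC hD hω hξ
end

section
/- Let {Xₖ}ₖ≥₁ be a sequence of independent random variables on a probability space with finite variances such that Σₖ Var(Xₖ)/k² < ∞. Then almost surely (1/n)·(Σₖ₌₁ⁿ Xₖ − Σₖ₌₁ⁿ E[Xₖ]) → 0 as n → ∞. -/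
/-!
The rescaled centred variables `Y k = (X k - 𝔼[X k]) / (k + 1)` are independent, centred and have
summable variances, so their partial sums form an `L²`-bounded, hence `L¹`-bounded, martingale,
which converges almost surely. Kronecker's lemma turns the convergence of
`∑ (X k - 𝔼[X k]) / (k + 1)` into the convergence of the averages
`(1/n) ∑ (X k - 𝔼[X k])` to `0`.
-/

open MeasureTheory ProbabilityTheory Filter Finset Topology

theorem tendsto_inv_mul_sum_of_tendsto_sum_div_succ {a : ℕ → ℝ} {L : ℝ}
    (h : Tendsto (fun n ↦ ∑ k ∈ range n, a k / (k + 1)) atTop (𝓝 L)) :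
    Tendsto (fun n : ℕ ↦ (n : ℝ)⁻¹ * ∑ k ∈ range n, a k) atTop (𝓝 0) := by
  set b : ℕ → ℝ := fun n ↦ ∑ k ∈ range n, a k / (k + 1)
  -- Abel summation: `a k = (k + 1) (b (k + 1) - b k)`.
  have abel : ∀ n : ℕ, ∑ k ∈ range n, a k = n * b n - ∑ k ∈ range n, b k := by
    intro n
    induction n with
    | zero => simp
    | succ n ih =>
      simp only [b, sum_range_succ] at ih ⊢
      rw [ih]
      push_cast
      field_simp
      ring
  have hcesaro :
      Tendsto (fun n ↦ b n - (n : ℝ)⁻¹ * ∑ k ∈ range n, b k) atTop (𝓝 (L - L)) :=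
    h.sub h.cesaro
  rw [sub_self] at hcesaro
  refine hcesaro.congr' ?_
  filter_upwards [eventually_ne_atTop 0] with n hn
  rw [abel, mul_sub, ← mul_assoc, inv_mul_cancel₀ (Nat.cast_ne_zero.mpr hn), one_mul]

namespace ProbabilityTheory

variable {Ω : Type*} {mΩ : MeasurableSpace Ω} {μ : Measure Ω} [IsProbabilityMeasure μ]

theorem eLpNorm_one_le_sqrt_variance {X : Ω → ℝ} (hX : MemLp X 2 μ) (hX0 : μ[X] = 0) :
    eLpNorm X 1 μ ≤ ENNReal.ofReal √(Var[X; μ]) := by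
  calc eLpNorm X 1 μ ≤ eLpNorm X 2 μ := eLpNorm_le_eLpNorm_of_exponent_le one_le_two hX.1
    _ = ENNReal.ofReal √(Var[X; μ]) := by
      rw [hX.eLpNorm_eq_integral_rpow_norm two_ne_zero ENNReal.ofNat_ne_top,
        variance_of_integral_eq_zero hX.1.aemeasurable hX0, Real.sqrt_eq_rpow]
      simp

theorem iIndepFun.martingale_sum_range_succ {E : Type*} [NormedAddCommGroup E]
    [NormedSpace ℝ E] [CompleteSpace E] [MeasurableSpace E] [BorelSpace E]
    [SecondCountableTopology E]
    {Y : ℕ → Ω → E} (hY : ∀ k, StronglyMeasurable (Y k)) (hindep : iIndepFun Y μ)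
    (hint : ∀ k, Integrable (Y k) μ) (hmean : ∀ k, μ[Y k] = 0) :
    Martingale (fun n ↦ ∑ k ∈ range (n + 1), Y k) (Filtration.natural Y hY) μ := by
  refine martingale_of_condExp_sub_eq_zero_nat (fun n ↦ ?_)
    (fun n ↦ integrable_finsetSum' _ fun k _ ↦ hint k) (fun n ↦ ?_)
  · refine Finset.stronglyMeasurable_sum _ fun k hk ↦ ?_
    exact (Filtration.stronglyAdapted_natural hY k).mono
      ((Filtration.natural Y hY).mono (Nat.lt_succ_iff.mp (mem_range.mp hk)))
  · rw [sum_range_succ _ (n + 1), add_sub_cancel_left]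
    refine (hindep.condExp_natural_ae_eq_of_lt hY n.lt_succ_self).trans ?_
    rw [hmean]
    rfl

theorem iIndepFun.ae_exists_tendsto_sum_of_summable_variance {Y : ℕ → Ω → ℝ}
    (hY : ∀ k, StronglyMeasurable (Y k)) (hindep : iIndepFun Y μ) (hL2 : ∀ k, MemLp (Y k) 2 μ)
    (hmean : ∀ k, μ[Y k] = 0) (hvar : Summable fun k ↦ Var[Y k; μ]) :
    ∀ᵐ ω ∂μ, ∃ L, Tendsto (fun n ↦ ∑ k ∈ range n, Y k ω) atTop (𝓝 L) := by
  have hmart := hindep.martingale_sum_range_succ hY (fun k ↦ (hL2 k).integrable one_le_two) hmean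
  have hbdd (n : ℕ) : eLpNorm (∑ k ∈ range (n + 1), Y k) 1 μ
      ≤ ENNReal.ofReal √(∑' k, Var[Y k; μ]) := by
    have hsum_L2 : MemLp (∑ k ∈ range (n + 1), Y k) 2 μ := memLp_finsetSum' _ fun k _ ↦ hL2 k
    have hsum_mean : μ[∑ k ∈ range (n + 1), Y k] = 0 := by
      simp only [Finset.sum_apply]
      rw [integral_finsetSum _ fun k _ ↦ (hL2 k).integrable one_le_two]
      simp [hmean]
    have hsum_var : Var[∑ k ∈ range (n + 1), Y k; μ] = ∑ k ∈ range (n + 1), Var[Y k; μ] :=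
      IndepFun.variance_sum (fun k _ ↦ hL2 k) fun i _ j _ hij ↦ hindep.indepFun hij
    refine (eLpNorm_one_le_sqrt_variance hsum_L2 hsum_mean).trans ?_
    rw [hsum_var]
    gcongr
    exact hvar.sum_le_tsum _ fun k _ ↦ variance_nonneg _ _
  filter_upwards [hmart.submartingale.exists_ae_tendsto_of_bdd hbdd] with ω ⟨L, hL⟩
  refine ⟨L, (tendsto_add_atTop_iff_nat 1).mp ?_⟩
  simpa only [Finset.sum_apply] using hL

end ProbabilityTheory

/-- Kolmogorov's strong law of large numbers: if `X 1, X 2, …` are independent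
random variables with `∑ Var(X k) / k² < ∞`, then almost surely
`(1/n) (∑_{k=1}^n X k − ∑_{k=1}^n E[X k]) → 0`.  (Indices start at `0`, so the
`k`-th variable is weighted by `1/(k+1)²`.) -/
theorem stmt17 {Ω : Type*} [MeasureSpace Ω] [IsProbabilityMeasure (ℙ : Measure Ω)]
    (X : ℕ → Ω → ℝ) (hmeas : ∀ k, Measurable (X k))
    (hindep : iIndepFun X ℙ)
    (hL2 : ∀ k, MemLp (X k) 2 ℙ)
    (hvar : Summable (fun k => variance (X k) ℙ / ((k : ℝ) + 1) ^ 2)) :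
    ∀ᵐ ω ∂ℙ, Tendsto
      (fun n : ℕ => (1 / (n : ℝ)) *
        ((∑ k ∈ Finset.range n, X k ω) - ∑ k ∈ Finset.range n, ∫ x, X k x ∂ℙ))
      atTop (nhds 0) := by
  set c : ℕ → ℝ := fun k ↦ ∫ x, X k x ∂ℙ
  set Y : ℕ → Ω → ℝ := fun k ω ↦ ((k : ℝ) + 1)⁻¹ * (X k ω - c k)
  have hY_indep : iIndepFun Y ℙ :=
    hindep.comp (fun k x ↦ ((k : ℝ) + 1)⁻¹ * (x - c k)) fun k ↦ by fun_prop
  have hY_L2 (k : ℕ) : MemLp (Y k) 2 ℙ := ((hL2 k).sub (memLp_const (c k))).const_mul _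
  have hY_mean (k : ℕ) : ℙ[Y k] = 0 := by
    simp [Y, integral_const_mul, integral_sub ((hL2 k).integrable one_le_two), c]
  have hY_var (k : ℕ) : Var[Y k; ℙ] = Var[X k; ℙ] / ((k : ℝ) + 1) ^ 2 := by
    rw [variance_const_mul, variance_sub_const (hL2 k).1, div_eq_inv_mul, inv_pow]
  have hconv := hY_indep.ae_exists_tendsto_sum_of_summable_variance
    (fun k ↦ (by fun_prop : Measurable (Y k)).stronglyMeasurable) hY_L2 hY_mean
    (by simpa only [hY_var] using hvar)
  filter_upwards [hconv] with ω ⟨L, hL⟩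
  simp_rw [one_div, ← sum_sub_distrib]
  refine tendsto_inv_mul_sum_of_tendsto_sum_div_succ (L := L) ?_
  simpa only [Y, inv_mul_eq_div] using hL
end

section
/- Let {Mₙ}ₙ≥₁ be a sequence of integers with Mₙ ≥ 7 for all n, let {aₙ} be a sequence of integers with 2 < aₙ + 1 < Mₙ, and let K = { Σₙ≥₁ dₙ/(M₁⋯Mₙ) : dₙ ∈ {0,1,...,aₙ+1} }. Suppose there exist c < 5/6 and an infinite set of indices n with (aₙ+1)/Mₙ ≤ c. Then there exists an increasing sequence of positive integers {kⱼ} and a nondegenerate open interval I ⊂ [0,1] such that for all x ∈ K and all j, the fractional part {kⱼ·x} ∉ I. -/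
/-!
Write `x ∈ K` as `∑ dₙ / (M₀⋯Mₙ)` and take `k = M₀⋯M_{m-1}` for an index `m` with
`(aₘ + 1)/Mₘ ≤ c`. In `k x` the first `m` terms become integers, and the remaining tail is
`dₘ/Mₘ` plus a series bounded by `Σ_{i ≥ 1} 7^{-i} = 1/6`. Hence `{k x} ≤ c + 1/6 < 1`, so the
fractional parts avoid `(c + 1/6, 1)`.
-/

open Finset

noncomputable def moranSeries (M d : ℕ → ℕ) : ℝ :=
  ∑' n : ℕ, (d n : ℝ) / ∏ i ∈ range (n + 1), (M i : ℝ)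

section

variable {M d : ℕ → ℕ} {b : ℝ}

lemma moranSeries_nonneg : 0 ≤ moranSeries M d :=
  tsum_nonneg fun _ => div_nonneg (Nat.cast_nonneg _) (prod_nonneg fun _ _ => Nat.cast_nonneg _)

lemma moranSeries_term_le_inv_pow (hb : 0 < b) (hMb : ∀ n, b ≤ M n) (hd : ∀ n, d n ≤ M n)
    (n : ℕ) :
    (d n : ℝ) / ∏ i ∈ range (n + 1), (M i : ℝ) ≤ b⁻¹ ^ n := by
  have hM : ∀ n, 0 < (M n : ℝ) := fun n => hb.trans_le (hMb n)
  have hpow : b ^ n ≤ ∏ i ∈ range n, (M i : ℝ) := by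
    simpa using prod_le_prod (s := range n) (fun _ _ => hb.le) fun i _ => hMb i
  calc (d n : ℝ) / ∏ i ∈ range (n + 1), (M i : ℝ)
      ≤ (M n : ℝ) / ((∏ i ∈ range n, (M i : ℝ)) * M n) := by
        rw [prod_range_succ]
        gcongr
        exact_mod_cast hd n
    _ = (∏ i ∈ range n, (M i : ℝ))⁻¹ := by rw [div_mul_cancel_right₀ (hM n).ne']
    _ ≤ b⁻¹ ^ n := by rw [inv_pow]; gcongr

lemma summable_moranSeries_term (hb : 1 < b) (hMb : ∀ n, b ≤ M n) (hd : ∀ n, d n ≤ M n) :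
    Summable fun n => (d n : ℝ) / ∏ i ∈ range (n + 1), (M i : ℝ) :=
  .of_nonneg_of_le
    (fun _ => div_nonneg (Nat.cast_nonneg _) (prod_nonneg fun _ _ => Nat.cast_nonneg _))
    (moranSeries_term_le_inv_pow (by linarith) hMb hd)
    (summable_geometric_of_lt_one (by positivity) (inv_lt_one_of_one_lt₀ hb))

lemma moranSeries_le_div_sub_one (hb : 1 < b) (hMb : ∀ n, b ≤ M n) (hd : ∀ n, d n ≤ M n) :
    moranSeries M d ≤ b / (b - 1) := by
  calc moranSeries M d ≤ ∑' n : ℕ, b⁻¹ ^ n :=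
        (summable_moranSeries_term hb hMb hd).tsum_le_tsum
          (moranSeries_term_le_inv_pow (by linarith) hMb hd)
          (summable_geometric_of_lt_one (by positivity) (inv_lt_one_of_one_lt₀ hb))
    _ = b / (b - 1) := by
        rw [tsum_geometric_of_lt_one (by positivity) (inv_lt_one_of_one_lt₀ hb)]
        field_simp

lemma moranSeries_eq_head_add_shift (hb : 1 < b) (hMb : ∀ n, b ≤ M n) (hd : ∀ n, d n ≤ M n) :
    moranSeries M d = (d 0 + moranSeries (fun n => M (n + 1)) (fun n => d (n + 1))) / M 0 := by
  rw [moranSeries, (summable_moranSeries_term hb hMb hd).tsum_eq_zero_add, moranSeries, add_div,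
    ← tsum_div_const]
  simp only [zero_add, range_one, prod_singleton, prod_range_succ' _ (_ + 1), div_mul_eq_div_div]

lemma moranSeries_le_head_add (hb : 1 < b) (hMb : ∀ n, b ≤ M n) (hd : ∀ n, d n ≤ M n) :
    moranSeries M d ≤ d 0 / M 0 + 1 / (b - 1) := by
  have htail := moranSeries_le_div_sub_one (M := fun n => M (n + 1)) (d := fun n => d (n + 1)) hb
    (fun n => hMb _) (fun n => hd _)
  rw [moranSeries_eq_head_add_shift hb hMb hd, add_div]
  refine add_le_add_right ?_ _
  calc moranSeries (fun n => M (n + 1)) (fun n => d (n + 1)) / M 0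
      ≤ b / (b - 1) / b := by gcongr; exact hMb 0
    _ = 1 / (b - 1) := by field_simp

lemma prod_mul_moranSeries_eq_natCast_add_shift (hb : 1 < b) (hMb : ∀ n, b ≤ M n)
    (hd : ∀ n, d n ≤ M n) (m : ℕ) : ∃ N : ℕ, (∏ i ∈ range m, (M i : ℝ)) * moranSeries M d =
      N + moranSeries (fun n => M (n + m)) (fun n => d (n + m)) := by
  induction m with
  | zero => exact ⟨0, by simp⟩
  | succ m ih =>
    obtain ⟨N, hN⟩ := ih
    have hshift := moranSeries_eq_head_add_shift (M := fun n => M (n + m))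
      (d := fun n => d (n + m)) hb (fun n => hMb _) (fun n => hd _)
    simp only [zero_add, add_right_comm _ 1 m, add_assoc] at hshift
    refine ⟨N * M m + d m, ?_⟩
    have hMm : (M m : ℝ) ≠ 0 := (by linarith [hMb m] : (0 : ℝ) < M m).ne'
    rw [prod_range_succ, mul_right_comm, hN, hshift]
    generalize moranSeries _ _ = S
    field_simp
    push_cast
    ring

lemma fract_prod_mul_moranSeries_le (hb : 1 < b) (hMb : ∀ n, b ≤ M n) (hd : ∀ n, d n ≤ M n)
    (m : ℕ) :
    Int.fract ((∏ i ∈ range m, (M i : ℝ)) * moranSeries M d) ≤ d m / M m + 1 / (b - 1) := by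
  obtain ⟨N, hN⟩ := prod_mul_moranSeries_eq_natCast_add_shift hb hMb hd m
  have hS := moranSeries_le_head_add (M := fun n => M (n + m)) (d := fun n => d (n + m)) hb
    (fun n => hMb _) (fun n => hd _)
  rw [hN, Int.fract_natCast_add]
  simp only [zero_add] at hS
  have hfloor : (0 : ℝ) ≤ ⌊moranSeries (fun n => M (n + m)) (fun n => d (n + m))⌋ := by
    exact_mod_cast Int.floor_nonneg.mpr moranSeries_nonneg
  rw [Int.fract]
  linarith

end

lemma strictMono_prod_range {M : ℕ → ℕ} (hM : ∀ n, 2 ≤ M n) :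
    StrictMono fun n => ∏ i ∈ range n, M i :=
  strictMono_nat_of_lt_succ fun n => by
    rw [prod_range_succ]
    exact lt_mul_of_one_lt_right (prod_pos fun i _ => by linarith [hM i]) (by linarith [hM n])

/-- A homogeneous Moran set with mixed radix bases `Mₙ ≥ 7` and digit sets
`{0, 1, …, aₙ + 1}` such that `(aₙ+1)/Mₙ ≤ c < 5/6` along an infinite set of
indices avoids a fixed nondegenerate open subinterval of `[0,1]` under the
fractional parts `{kⱼ x}` for a suitable increasing sequence `kⱼ` of positive
integers. -/
theorem stmt18 (M a : ℕ → ℕ) (hM : ∀ n, 7 ≤ M n)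
    (ha : ∀ n, 2 < a n + 1 ∧ a n + 1 < M n)
    (c : ℝ) (hc : c < 5 / 6)
    (hinf : ∀ N : ℕ, ∃ n, N ≤ n ∧ ((a n : ℝ) + 1) / (M n : ℝ) ≤ c)
    (K : Set ℝ)
    (hK : K = {x : ℝ | ∃ d : ℕ → ℕ, (∀ n, d n ≤ a n + 1) ∧
      x = ∑' n : ℕ, (d n : ℝ) / ∏ i ∈ Finset.range (n + 1), (M i : ℝ)}) :
    ∃ (k : ℕ → ℕ) (α β : ℝ), StrictMono k ∧ (∀ j, 0 < k j) ∧ α < β ∧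
      Set.Ioo α β ⊆ Set.Icc (0 : ℝ) 1 ∧
      ∀ x ∈ K, ∀ j, Int.fract ((k j : ℝ) * x) ∉ Set.Ioo α β := by
  have hM7 (n : ℕ) : (7 : ℝ) ≤ M n := by exact_mod_cast hM n
  have hc0 : 0 < c := by
    obtain ⟨n, -, hn⟩ := hinf 0
    exact lt_of_lt_of_le (div_pos (by positivity) (by linarith [hM7 n])) hn
  obtain ⟨φ, hφ, hφc⟩ := Filter.extraction_of_frequently_atTop (Filter.frequently_atTop.mpr hinf)
  refine ⟨fun j => ∏ i ∈ range (φ j), M i, c + 1 / 6, 1,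
    (strictMono_prod_range fun n => by linarith [hM n]).comp hφ,
    fun j => prod_pos fun i _ => by linarith [hM i], by linarith,
    fun y hy => ⟨by linarith [hy.1], hy.2.le⟩, ?_⟩
  rintro x hx j ⟨hlo, -⟩
  obtain ⟨d, hd, rfl⟩ := hK ▸ hx
  have hdigit : (d (φ j) : ℝ) / M (φ j) ≤ c :=
    (div_le_div_of_nonneg_right (by exact_mod_cast hd (φ j)) (by positivity)).trans (hφc j)
  have hfract := fract_prod_mul_moranSeries_le (by norm_num) hM7
    (fun n => (hd n).trans (ha n).2.le) (φ j)
  norm_num at hfract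
  push_cast at hlo
  exact hlo.not_ge (hfract.trans (by linarith))
end
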